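/- For every 1 ≤ i ≤ n, the generator applied to the local energy satisfies L H_i = Φ_{i−1} − Φ_i (as an identity of smooth functions on X). -/

import Mathlib

open scoped BigOperators
open MeasureTheory

noncomputable section

namespace EP

/-- `d`-dimensional vectors. -/
abbrev Vec (d : ℕ) := Fin d → ℝ

/-- The phase space `X = (ℝ^d)^n × (ℝ^d)^n × (ℝ^d × ℝ^d)`,
coordinates `x = (p, q, (r₁, rₙ))`. -/
abbrev Phase (d n : ℕ) := (Fin n → Vec d) × (Fin n → Vec d) × (Vec d × Vec d)

/-- Euclidean dot product on `ℝ^d`. -/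
def dotp {d : ℕ} (a b : Vec d) : ℝ := ∑ j, a j * b j

/-- 1-based access to an `n`-tuple of vectors (defaults to `0` out of range;
all uses below are in range). -/
def nth {d n : ℕ} (v : Fin n → Vec d) (i : ℕ) : Vec d :=
  if h : 1 ≤ i ∧ i ≤ n then v ⟨i - 1, by omega⟩ else 0

/-- The coordinate direction `j` of the `i`-th (1-based) vector in `(ℝ^d)^n`. -/
def basisQ (d n : ℕ) (i : ℕ) (j : Fin d) : Fin n → Vec d :=
  if h : 1 ≤ i ∧ i ≤ n then Pi.single (⟨i - 1, by omega⟩ : Fin n) (Pi.single j 1) else 0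

/-- Coordinate direction in `X`: component `j` of `p_i`. -/
def eP (d n : ℕ) (i : ℕ) (j : Fin d) : Phase d n := (basisQ d n i j, 0, 0, 0)
/-- Coordinate direction in `X`: component `j` of `q_i`. -/
def eQ (d n : ℕ) (i : ℕ) (j : Fin d) : Phase d n := (0, basisQ d n i j, 0, 0)
/-- Coordinate direction in `X`: component `j` of `r₁`. -/
def eR1 (d n : ℕ) (j : Fin d) : Phase d n := (0, 0, Pi.single j 1, 0)
/-- Coordinate direction in `X`: component `j` of `rₙ`. -/
def eRn (d n : ℕ) (j : Fin d) : Phase d n := (0, 0, 0, Pi.single j 1)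

/-- First-order partial derivative of `f` in direction `v` at `x`. -/
def pd {d n : ℕ} (f : Phase d n → ℝ) (v x : Phase d n) : ℝ := fderiv ℝ f x v

/-- Second-order partial derivative of `f` in direction `v` at `x`. -/
def pd2 {d n : ℕ} (f : Phase d n → ℝ) (v x : Phase d n) : ℝ :=
  fderiv ℝ (fun y => fderiv ℝ f y v) x v

/-- The potential `V(q) = Σ_{i=1}^n U¹(q_i) + Σ_{i=1}^{n-1} U²(q_i - q_{i+1})`. -/
def Vpot (d n : ℕ) (U1 U2 : Vec d → ℝ) (q : Fin n → Vec d) : ℝ :=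
  (∑ i ∈ Finset.Icc 1 n, U1 (nth q i)) +
  (∑ i ∈ Finset.Icc 1 (n - 1), U2 (nth q i - nth q (i + 1)))

/-- `L₀ f = γ(T₁ Δ_{r₁} f + Tₙ Δ_{rₙ} f - r₁·∇_{r₁} f - rₙ·∇_{rₙ} f)`. -/
def gen0 (d n : ℕ) (ga T1 Tn : ℝ) (f : Phase d n → ℝ) (x : Phase d n) : ℝ :=
  ga * (T1 * ∑ j, pd2 f (eR1 d n j) x + Tn * ∑ j, pd2 f (eRn d n j) x
      - ∑ j, x.2.2.1 j * pd f (eR1 d n j) x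
      - ∑ j, x.2.2.2 j * pd f (eRn d n j) x)

/-- The first-order part
`L₁ f = λ(p₁·∇_{r₁} f + pₙ·∇_{rₙ} f - r₁·∇_{p₁} f - rₙ·∇_{pₙ} f)
  + (Σ p_i·∇_{q_i} f - Σ ∇_{q_i}V·∇_{p_i} f)`. -/
def gen1 (d n : ℕ) (U1 U2 : Vec d → ℝ) (lam : ℝ) (f : Phase d n → ℝ) (x : Phase d n) : ℝ :=
  lam * ((∑ j, nth x.1 1 j * pd f (eR1 d n j) x)
       + (∑ j, nth x.1 n j * pd f (eRn d n j) x)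
       - (∑ j, x.2.2.1 j * pd f (eP d n 1 j) x)
       - (∑ j, x.2.2.2 j * pd f (eP d n n j) x))
  + ((∑ i ∈ Finset.Icc 1 n, ∑ j, nth x.1 i j * pd f (eQ d n i j) x)
   - (∑ i ∈ Finset.Icc 1 n, ∑ j,
       fderiv ℝ (Vpot d n U1 U2) x.2.1 (basisQ d n i j) * pd f (eP d n i j) x))

/-- The generator `L = L₀ + L₁`. -/
def gen (d n : ℕ) (U1 U2 : Vec d → ℝ) (ga lam T1 Tn : ℝ)
    (f : Phase d n → ℝ) (x : Phase d n) : ℝ :=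
  gen0 d n ga T1 Tn f x + gen1 d n U1 U2 lam f x

/-- The formal adjoint `Lᵀ`. -/
def genT (d n : ℕ) (U1 U2 : Vec d → ℝ) (ga lam T1 Tn : ℝ)
    (g : Phase d n → ℝ) (x : Phase d n) : ℝ :=
  ga * (T1 * ∑ j, pd2 g (eR1 d n j) x + Tn * ∑ j, pd2 g (eRn d n j) x
      + ∑ j, x.2.2.1 j * pd g (eR1 d n j) x
      + ∑ j, x.2.2.2 j * pd g (eRn d n j) x
      + 2 * (d : ℝ) * g x)
  - lam * ((∑ j, nth x.1 1 j * pd g (eR1 d n j) x)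
         + (∑ j, nth x.1 n j * pd g (eRn d n j) x)
         - (∑ j, x.2.2.1 j * pd g (eP d n 1 j) x)
         - (∑ j, x.2.2.2 j * pd g (eP d n n j) x))
  - ((∑ i ∈ Finset.Icc 1 n, ∑ j, nth x.1 i j * pd g (eQ d n i j) x)
   - (∑ i ∈ Finset.Icc 1 n, ∑ j,
       fderiv ℝ (Vpot d n U1 U2) x.2.1 (basisQ d n i j) * pd g (eP d n i j) x))

/-- The heat flows `Φ_i`, `0 ≤ i ≤ n`. -/
def flow (d n : ℕ) (U2 : Vec d → ℝ) (lam : ℝ) (i : ℕ) (x : Phase d n) : ℝ :=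
  if i = 0 then - lam * dotp x.2.2.1 (nth x.1 1)
  else if i = n then lam * dotp x.2.2.2 (nth x.1 n)
  else ∑ j, ((nth x.1 i j + nth x.1 (i + 1) j) / 2) *
        fderiv ℝ U2 (nth x.2.1 i - nth x.2.1 (i + 1)) (Pi.single j 1)

/-- The entropy productions `σ_i = (1/Tₙ - 1/T₁) Φ_i`. -/
def sigmaF (d n : ℕ) (U2 : Vec d → ℝ) (lam T1 Tn : ℝ) (i : ℕ) (x : Phase d n) : ℝ :=
  (1 / Tn - 1 / T1) * flow d n U2 lam i x

/-- The local energies `H_i`, `1 ≤ i ≤ n`. -/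
def locH (d n : ℕ) (U1 U2 : Vec d → ℝ) (i : ℕ) (x : Phase d n) : ℝ :=
  dotp (nth x.1 i) (nth x.1 i) / 2 + U1 (nth x.2.1 i)
  + (if 2 ≤ i then U2 (nth x.2.1 (i - 1) - nth x.2.1 i) else 0) / 2
  + (if i < n then U2 (nth x.2.1 i - nth x.2.1 (i + 1)) else 0) / 2

/-- `R_i = (1/T₁)(|r₁|²/2 + Σ_{k=1}^i H_k) + (1/Tₙ)(Σ_{k=i+1}^n H_k + |rₙ|²/2)`. -/
def Rfun (d n : ℕ) (U1 U2 : Vec d → ℝ) (T1 Tn : ℝ) (i : ℕ) (x : Phase d n) : ℝ :=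
  (1 / T1) * (dotp x.2.2.1 x.2.2.1 / 2 + ∑ k ∈ Finset.Icc 1 i, locH d n U1 U2 k x)
  + (1 / Tn) * ((∑ k ∈ Finset.Icc (i + 1) n, locH d n U1 U2 k x) + dotp x.2.2.2 x.2.2.2 / 2)

/-- The total energy `G(p,q,r) = |r₁|²/2 + |rₙ|²/2 + Σ|p_i|²/2 + V(q)`. -/
def Gfun (d n : ℕ) (U1 U2 : Vec d → ℝ) (x : Phase d n) : ℝ :=
  dotp x.2.2.1 x.2.2.1 / 2 + dotp x.2.2.2 x.2.2.2 / 2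
  + (∑ i : Fin n, dotp (x.1 i) (x.1 i) / 2) + Vpot d n U1 U2 x.2.1

/-- The chain energy `H_S(p,q) = Σ|p_i|²/2 + V(q)`. -/
def HS (d n : ℕ) (U1 U2 : Vec d → ℝ) (x : Phase d n) : ℝ :=
  (∑ i : Fin n, dotp (x.1 i) (x.1 i) / 2) + Vpot d n U1 U2 x.2.1

/-- Momentum reversal `(Jf)(p,q,r) = f(-p,q,r)`. -/
def Jop {d n : ℕ} (f : Phase d n → ℝ) : Phase d n → ℝ := fun x => f (-x.1, x.2)

/-- `L̃_α f = L f + 2αγ (r₁·∇_{r₁} f + rₙ·∇_{rₙ} f)`. -/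
def genTilde (d n : ℕ) (U1 U2 : Vec d → ℝ) (ga lam T1 Tn al : ℝ)
    (f : Phase d n → ℝ) (x : Phase d n) : ℝ :=
  gen d n U1 U2 ga lam T1 Tn f x
  + 2 * al * ga * ((∑ j, x.2.2.1 j * pd f (eR1 d n j) x)
                 + (∑ j, x.2.2.2 j * pd f (eRn d n j) x))

/-- `L̄_α f = L̃_α f - ((α-α²)γ(|r₁|²/T₁ + |rₙ|²/Tₙ) - 2dαγ) f`. -/
def genBar (d n : ℕ) (U1 U2 : Vec d → ℝ) (ga lam T1 Tn al : ℝ)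
    (f : Phase d n → ℝ) (x : Phase d n) : ℝ :=
  genTilde d n U1 U2 ga lam T1 Tn al f x
  - ((al - al ^ 2) * ga * (dotp x.2.2.1 x.2.2.1 / T1 + dotp x.2.2.2 x.2.2.2 / Tn)
     - 2 * (d : ℝ) * al * ga) * f x


section Aux

variable {d n : ℕ} {U1 U2 : Vec d → ℝ}

@[simp] lemma nth_zero (i : ℕ) : nth (0 : Fin n → Vec d) i = 0 := by
  unfold nth; split <;> simp

@[simp] lemma dotp_zero_right (a : Vec d) : dotp a 0 = 0 := by simp [dotp]

lemma dotp_single (a : Vec d) (j : Fin d) : dotp a (Pi.single j 1) = a j := by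
  simp [dotp, Pi.single_apply]

lemma nth_basisQ {i : ℕ} (h1 : 1 ≤ i) (h2 : i ≤ n) (j : Fin d) (k : ℕ) :
    nth (basisQ d n i j) k = if i = k then Pi.single j 1 else 0 := by
  unfold nth basisQ
  by_cases hk : 1 ≤ k ∧ k ≤ n
  · rw [dif_pos hk, dif_pos (⟨h1, h2⟩ : 1 ≤ i ∧ i ≤ n), Pi.single_apply]
    by_cases hik : i = k
    · rw [if_pos (by simp only [Fin.mk.injEq]; omega), if_pos hik]
    · rw [if_neg (by simp only [Fin.mk.injEq]; omega), if_neg hik]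
  · rw [dif_neg hk, if_neg (by rintro rfl; exact hk ⟨h1, h2⟩)]

def nthCLM (d n : ℕ) (i : ℕ) : (Fin n → Vec d) →L[ℝ] Vec d :=
  if h : 1 ≤ i ∧ i ≤ n then ContinuousLinearMap.proj ⟨i - 1, by omega⟩ else 0

@[simp] lemma nthCLM_apply (i : ℕ) (v : Fin n → Vec d) : nthCLM d n i v = nth v i := by
  unfold nthCLM nth; split <;> rfl

def pCLM (d n : ℕ) (i : ℕ) : Phase d n →L[ℝ] Vec d :=
  (nthCLM d n i).comp (ContinuousLinearMap.fst ℝ _ _)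

def qCLM (d n : ℕ) (i : ℕ) : Phase d n →L[ℝ] Vec d :=
  (nthCLM d n i).comp ((ContinuousLinearMap.fst ℝ _ _).comp (ContinuousLinearMap.snd ℝ _ _))

@[simp] lemma pCLM_apply (i : ℕ) (x : Phase d n) : pCLM d n i x = nth x.1 i := by
  simp [pCLM]

@[simp] lemma qCLM_apply (i : ℕ) (x : Phase d n) : qCLM d n i x = nth x.2.1 i := by
  simp [qCLM]

def dotCLM {d : ℕ} (a : Vec d) : Vec d →L[ℝ] ℝ :=
  ∑ j, a j • (ContinuousLinearMap.proj j : Vec d →L[ℝ] ℝ)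

@[simp] lemma dotCLM_apply (a v : Vec d) : dotCLM a v = dotp a v := by
  simp [dotCLM, dotp, ContinuousLinearMap.sum_apply]

lemma hasFDerivAt_dot_half (a : Vec d) :
    HasFDerivAt (fun b : Vec d => dotp b b / 2) (dotCLM a) a := by
  have h1 : ∀ j : Fin d, HasFDerivAt (fun b : Vec d => b j * b j)
      (a j • (ContinuousLinearMap.proj j : Vec d →L[ℝ] ℝ)
       + a j • (ContinuousLinearMap.proj j : Vec d →L[ℝ] ℝ)) a :=
    fun j => (ContinuousLinearMap.proj j : Vec d →L[ℝ] ℝ).hasFDerivAt.mul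
      (ContinuousLinearMap.proj j : Vec d →L[ℝ] ℝ).hasFDerivAt
  have h2 := (HasFDerivAt.fun_sum (fun j (_ : j ∈ Finset.univ) => h1 j)).const_smul (2:ℝ)⁻¹
  have h3 : HasFDerivAt (fun b : Vec d => dotp b b / 2)
      ((2:ℝ)⁻¹ • ∑ j, (a j • (ContinuousLinearMap.proj j : Vec d →L[ℝ] ℝ)
       + a j • (ContinuousLinearMap.proj j : Vec d →L[ℝ] ℝ))) a := by
    refine h2.congr_of_eventuallyEq (Filter.Eventually.of_forall fun b => ?_)
    simp [dotp, div_eq_inv_mul, smul_eq_mul]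
  refine h3.congr_fderiv ?_
  symm
  ext v
  simp only [dotCLM_apply, dotp, ContinuousLinearMap.coe_smul', Pi.smul_apply,
    ContinuousLinearMap.sum_apply, ContinuousLinearMap.add_apply,
    ContinuousLinearMap.smul_apply, ContinuousLinearMap.proj_apply, smul_eq_mul,
    Finset.mul_sum]
  exact Finset.sum_congr rfl (fun j _ => by ring)

def locDer (d n : ℕ) (U1 U2 : Vec d → ℝ) (i : ℕ) (x : Phase d n) : Phase d n →L[ℝ] ℝ :=
  (dotCLM (nth x.1 i)).comp (pCLM d n i)
  + (fderiv ℝ U1 (nth x.2.1 i)).comp (qCLM d n i)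
  + (if 2 ≤ i then
      (2:ℝ)⁻¹ • (fderiv ℝ U2 (nth x.2.1 (i - 1) - nth x.2.1 i)).comp
        (qCLM d n (i - 1) - qCLM d n i) else 0)
  + (if i < n then
      (2:ℝ)⁻¹ • (fderiv ℝ U2 (nth x.2.1 i - nth x.2.1 (i + 1))).comp
        (qCLM d n i - qCLM d n (i + 1)) else 0)

lemma hasFDerivAt_locH (hU1 : ContDiff ℝ (⊤ : ℕ∞) U1) (hU2 : ContDiff ℝ (⊤ : ℕ∞) U2)
    (i : ℕ) (x : Phase d n) :
    HasFDerivAt (locH d n U1 U2 i) (locDer d n U1 U2 i x) x := by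
  have hA : HasFDerivAt (fun y : Phase d n => dotp (nth y.1 i) (nth y.1 i) / 2)
      ((dotCLM (nth x.1 i)).comp (pCLM d n i)) x := by
    have h0 := (hasFDerivAt_dot_half (pCLM d n i x)).comp x (pCLM d n i).hasFDerivAt
    rw [pCLM_apply] at h0
    exact h0.congr_of_eventuallyEq (Filter.Eventually.of_forall fun y => by
      simp [Function.comp])
  have hB : HasFDerivAt (fun y : Phase d n => U1 (nth y.2.1 i))
      ((fderiv ℝ U1 (nth x.2.1 i)).comp (qCLM d n i)) x := by
    have h0 := (((hU1.differentiable (by simp)) (qCLM d n i x)).hasFDerivAt).comp x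
      (qCLM d n i).hasFDerivAt
    rw [qCLM_apply] at h0
    exact h0.congr_of_eventuallyEq (Filter.Eventually.of_forall fun y => by
      simp [Function.comp])
  have hC : HasFDerivAt
      (fun y : Phase d n => (if 2 ≤ i then U2 (nth y.2.1 (i - 1) - nth y.2.1 i) else 0) / 2)
      (if 2 ≤ i then
        (2:ℝ)⁻¹ • (fderiv ℝ U2 (nth x.2.1 (i - 1) - nth x.2.1 i)).comp
          (qCLM d n (i - 1) - qCLM d n i) else 0) x := by
    by_cases h2 : 2 ≤ i
    · rw [if_pos h2]
      set A := qCLM d n (i - 1) - qCLM d n i with hA'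
      have hAx : A x = nth x.2.1 (i - 1) - nth x.2.1 i := by
        simp [hA', ContinuousLinearMap.sub_apply]
      have h0 := ((((hU2.differentiable (by simp)) (A x)).hasFDerivAt).comp x
        A.hasFDerivAt).const_smul (2:ℝ)⁻¹
      rw [hAx] at h0
      refine h0.congr_of_eventuallyEq (Filter.Eventually.of_forall fun y => ?_)
      simp [Function.comp, if_pos h2, hA', ContinuousLinearMap.sub_apply,
        div_eq_inv_mul, smul_eq_mul]
    · rw [if_neg h2]
      simp only [if_neg h2]
      simpa using (hasFDerivAt_const (0:ℝ) x)
  have hD : HasFDerivAt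
      (fun y : Phase d n => (if i < n then U2 (nth y.2.1 i - nth y.2.1 (i + 1)) else 0) / 2)
      (if i < n then
        (2:ℝ)⁻¹ • (fderiv ℝ U2 (nth x.2.1 i - nth x.2.1 (i + 1))).comp
          (qCLM d n i - qCLM d n (i + 1)) else 0) x := by
    by_cases h3 : i < n
    · rw [if_pos h3]
      set A := qCLM d n i - qCLM d n (i + 1) with hA'
      have hAx : A x = nth x.2.1 i - nth x.2.1 (i + 1) := by
        simp [hA', ContinuousLinearMap.sub_apply]
      have h0 := ((((hU2.differentiable (by simp)) (A x)).hasFDerivAt).comp x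
        A.hasFDerivAt).const_smul (2:ℝ)⁻¹
      rw [hAx] at h0
      refine h0.congr_of_eventuallyEq (Filter.Eventually.of_forall fun y => ?_)
      simp [Function.comp, if_pos h3, hA', ContinuousLinearMap.sub_apply,
        div_eq_inv_mul, smul_eq_mul]
    · rw [if_neg h3]
      simp only [if_neg h3]
      simpa using (hasFDerivAt_const (0:ℝ) x)
  exact ((hA.add hB).add hC).add hD

lemma pd_locH (hU1 : ContDiff ℝ (⊤ : ℕ∞) U1) (hU2 : ContDiff ℝ (⊤ : ℕ∞) U2)
    (i : ℕ) (v x : Phase d n) :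
    pd (locH d n U1 U2 i) v x
      = dotp (nth x.1 i) (nth v.1 i) + fderiv ℝ U1 (nth x.2.1 i) (nth v.2.1 i)
      + (if 2 ≤ i then
          fderiv ℝ U2 (nth x.2.1 (i - 1) - nth x.2.1 i) (nth v.2.1 (i - 1) - nth v.2.1 i)
          else 0) / 2
      + (if i < n then
          fderiv ℝ U2 (nth x.2.1 i - nth x.2.1 (i + 1)) (nth v.2.1 i - nth v.2.1 (i + 1))
          else 0) / 2 := by
  rw [pd, (hasFDerivAt_locH hU1 hU2 i x).fderiv]
  simp only [locDer, ContinuousLinearMap.add_apply, ContinuousLinearMap.coe_comp',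
    Function.comp_apply, ContinuousLinearMap.smul_apply, ContinuousLinearMap.coe_sub',
    Pi.sub_apply, pCLM_apply, qCLM_apply, dotCLM_apply, smul_eq_mul]
  split_ifs <;> simp <;> ring

lemma pd_locH_eR1 (hU1 : ContDiff ℝ (⊤ : ℕ∞) U1) (hU2 : ContDiff ℝ (⊤ : ℕ∞) U2)
    (i : ℕ) (j : Fin d) (x : Phase d n) :
    pd (locH d n U1 U2 i) (eR1 d n j) x = 0 := by
  rw [pd_locH hU1 hU2]
  simp [eR1]

lemma pd_locH_eRn (hU1 : ContDiff ℝ (⊤ : ℕ∞) U1) (hU2 : ContDiff ℝ (⊤ : ℕ∞) U2)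
    (i : ℕ) (j : Fin d) (x : Phase d n) :
    pd (locH d n U1 U2 i) (eRn d n j) x = 0 := by
  rw [pd_locH hU1 hU2]
  simp [eRn]

lemma pd2_locH_eR1 (hU1 : ContDiff ℝ (⊤ : ℕ∞) U1) (hU2 : ContDiff ℝ (⊤ : ℕ∞) U2)
    (i : ℕ) (j : Fin d) (x : Phase d n) :
    pd2 (locH d n U1 U2 i) (eR1 d n j) x = 0 := by
  have h : (fun y : Phase d n => fderiv ℝ (locH d n U1 U2 i) y (eR1 d n j))
      = fun _ => (0:ℝ) := funext fun y => pd_locH_eR1 hU1 hU2 i j y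
  rw [pd2, h]
  simp

lemma pd2_locH_eRn (hU1 : ContDiff ℝ (⊤ : ℕ∞) U1) (hU2 : ContDiff ℝ (⊤ : ℕ∞) U2)
    (i : ℕ) (j : Fin d) (x : Phase d n) :
    pd2 (locH d n U1 U2 i) (eRn d n j) x = 0 := by
  have h : (fun y : Phase d n => fderiv ℝ (locH d n U1 U2 i) y (eRn d n j))
      = fun _ => (0:ℝ) := funext fun y => pd_locH_eRn hU1 hU2 i j y
  rw [pd2, h]
  simp

lemma clm_ite_zero {E F : Type*} [NormedAddCommGroup E] [NormedSpace ℝ E]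
    [NormedAddCommGroup F] [NormedSpace ℝ F]
    (L : E →L[ℝ] F) (P : Prop) [Decidable P] (a : E) :
    L (if P then a else 0) = if P then L a else 0 := by
  split_ifs <;> simp

lemma pd_locH_eP (hU1 : ContDiff ℝ (⊤ : ℕ∞) U1) (hU2 : ContDiff ℝ (⊤ : ℕ∞) U2)
    {k : ℕ} (hk1 : 1 ≤ k) (hk2 : k ≤ n) (i : ℕ) (j : Fin d) (x : Phase d n) :
    pd (locH d n U1 U2 i) (eP d n k j) x = if k = i then nth x.1 i j else 0 := by
  rw [pd_locH hU1 hU2]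
  simp only [eP, nth_zero, nth_basisQ hk1 hk2, map_zero, dotp_zero_right, sub_zero,
    zero_sub, neg_zero, add_zero, zero_div, ite_self]
  split_ifs <;> simp [dotp_single]

lemma pd_locH_eQ (hU1 : ContDiff ℝ (⊤ : ℕ∞) U1) (hU2 : ContDiff ℝ (⊤ : ℕ∞) U2)
    {i k : ℕ} (hi1 : 1 ≤ i) (hi2 : i ≤ n) (hk1 : 1 ≤ k) (hk2 : k ≤ n)
    (j : Fin d) (x : Phase d n) :
    pd (locH d n U1 U2 i) (eQ d n k j) x
      = (if k = i then fderiv ℝ U1 (nth x.2.1 i) (Pi.single j 1)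
            - (if 2 ≤ i then
                fderiv ℝ U2 (nth x.2.1 (i - 1) - nth x.2.1 i) (Pi.single j 1) else 0) / 2
            + (if i < n then
                fderiv ℝ U2 (nth x.2.1 i - nth x.2.1 (i + 1)) (Pi.single j 1) else 0) / 2
          else 0)
        + (if 2 ≤ i ∧ k = i - 1 then
            fderiv ℝ U2 (nth x.2.1 (i - 1) - nth x.2.1 i) (Pi.single j 1) / 2 else 0)
        - (if i < n ∧ k = i + 1 then
            fderiv ℝ U2 (nth x.2.1 i - nth x.2.1 (i + 1)) (Pi.single j 1) / 2 else 0) := by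
  rw [pd_locH hU1 hU2]
  simp only [eQ, nth_zero, dotp_zero_right, nth_basisQ hk1 hk2, map_sub, clm_ite_zero,
    map_zero, zero_add]
  split_ifs <;> first
    | (exfalso; omega)
    | ring

end Aux


section Aux2

variable {d n : ℕ} {U1 U2 : Vec d → ℝ}

def VpotDer (d n : ℕ) (U1 U2 : Vec d → ℝ) (q : Fin n → Vec d) : (Fin n → Vec d) →L[ℝ] ℝ :=
  (∑ k ∈ Finset.Icc 1 n, (fderiv ℝ U1 (nth q k)).comp (nthCLM d n k))
  + ∑ k ∈ Finset.Icc 1 (n - 1),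
      (fderiv ℝ U2 (nth q k - nth q (k + 1))).comp (nthCLM d n k - nthCLM d n (k + 1))

lemma hasFDerivAt_Vpot (hU1 : ContDiff ℝ (⊤ : ℕ∞) U1) (hU2 : ContDiff ℝ (⊤ : ℕ∞) U2)
    (q : Fin n → Vec d) : HasFDerivAt (Vpot d n U1 U2) (VpotDer d n U1 U2 q) q := by
  have h1 : ∀ k ∈ Finset.Icc 1 n, HasFDerivAt (fun q' : Fin n → Vec d => U1 (nth q' k))
      ((fderiv ℝ U1 (nth q k)).comp (nthCLM d n k)) q := by
    intro k _
    have h0 := (((hU1.differentiable (by simp)) (nthCLM d n k q)).hasFDerivAt).comp q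
      (nthCLM d n k).hasFDerivAt
    rw [nthCLM_apply] at h0
    exact h0.congr_of_eventuallyEq (Filter.Eventually.of_forall fun y => by
      simp [Function.comp])
  have h2 : ∀ k ∈ Finset.Icc 1 (n - 1),
      HasFDerivAt (fun q' : Fin n → Vec d => U2 (nth q' k - nth q' (k + 1)))
      ((fderiv ℝ U2 (nth q k - nth q (k + 1))).comp (nthCLM d n k - nthCLM d n (k + 1))) q := by
    intro k _
    set A := nthCLM d n k - nthCLM d n (k + 1) with hA'
    have hAx : A q = nth q k - nth q (k + 1) := by
      simp [hA', ContinuousLinearMap.sub_apply]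
    have h0 := (((hU2.differentiable (by simp)) (A q)).hasFDerivAt).comp q A.hasFDerivAt
    rw [hAx] at h0
    exact h0.congr_of_eventuallyEq (Filter.Eventually.of_forall fun y => by
      simp [Function.comp, hA', ContinuousLinearMap.sub_apply])
  have := (HasFDerivAt.fun_sum h1).add (HasFDerivAt.fun_sum h2)
  exact this.congr_of_eventuallyEq (Filter.Eventually.of_forall fun y => rfl)

lemma fderiv_Vpot_basis (hU1 : ContDiff ℝ (⊤ : ℕ∞) U1) (hU2 : ContDiff ℝ (⊤ : ℕ∞) U2)
    {i : ℕ} (h1 : 1 ≤ i) (h2 : i ≤ n) (j : Fin d) (q : Fin n → Vec d) :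
    fderiv ℝ (Vpot d n U1 U2) q (basisQ d n i j)
      = fderiv ℝ U1 (nth q i) (Pi.single j 1)
        + (if i < n then fderiv ℝ U2 (nth q i - nth q (i + 1)) (Pi.single j 1) else 0)
        - (if 2 ≤ i then fderiv ℝ U2 (nth q (i - 1) - nth q i) (Pi.single j 1) else 0) := by
  rw [show fderiv ℝ (Vpot d n U1 U2) q = VpotDer d n U1 U2 q from
    (hasFDerivAt_Vpot hU1 hU2 q).fderiv]
  simp only [VpotDer, ContinuousLinearMap.add_apply, ContinuousLinearMap.sum_apply,
    ContinuousLinearMap.coe_comp', Function.comp_apply, ContinuousLinearMap.coe_sub',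
    Pi.sub_apply, nthCLM_apply, nth_basisQ h1 h2, map_sub, clm_ite_zero]
  have e1 : (∑ k ∈ Finset.Icc 1 n,
      if i = k then fderiv ℝ U1 (nth q k) (Pi.single j 1) else 0)
      = fderiv ℝ U1 (nth q i) (Pi.single j 1) := by
    rw [Finset.sum_ite_eq]
    simp [Finset.mem_Icc, h1, h2]
  have e2 : (∑ k ∈ Finset.Icc 1 (n - 1),
      ((if i = k then fderiv ℝ U2 (nth q k - nth q (k + 1)) (Pi.single j 1) else 0)
       - (if i = k + 1 then fderiv ℝ U2 (nth q k - nth q (k + 1)) (Pi.single j 1) else 0)))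
      = (if i < n then fderiv ℝ U2 (nth q i - nth q (i + 1)) (Pi.single j 1) else 0)
        - (if 2 ≤ i then fderiv ℝ U2 (nth q (i - 1) - nth q i) (Pi.single j 1) else 0) := by
    rw [Finset.sum_sub_distrib]
    congr 1
    · rw [Finset.sum_ite_eq]
      simp only [Finset.mem_Icc]
      by_cases h3 : i < n
      · rw [if_pos ⟨h1, by omega⟩, if_pos h3]
      · rw [if_neg (by omega), if_neg h3]
    · by_cases h4 : 2 ≤ i
      · rw [if_pos h4]
        have heq : ∀ k ∈ Finset.Icc 1 (n - 1),
            (if i = k + 1 then fderiv ℝ U2 (nth q k - nth q (k + 1)) (Pi.single j 1) else 0)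
            = (if i - 1 = k then fderiv ℝ U2 (nth q k - nth q (k + 1)) (Pi.single j 1) else 0) := by
          intro k _
          congr 1
          exact propext (by omega)
        rw [Finset.sum_congr rfl heq, Finset.sum_ite_eq]
        rw [if_pos (by simp only [Finset.mem_Icc]; omega), show i - 1 + 1 = i from by omega]
      · rw [if_neg h4]
        refine Finset.sum_eq_zero fun k hk => ?_
        simp only [Finset.mem_Icc] at hk
        exact if_neg (by omega)
  rw [e1, e2]
  ring

end Aux2

/-- For every `1 ≤ i ≤ n`, `L H_i = Φ_{i-1} - Φ_i`. -/
theorem gen_locH_eq_flow_sub_flow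
    (d n : ℕ) (hd : 1 ≤ d) (hn : 2 ≤ n)
    (U1 U2 : Vec d → ℝ) (hU1 : ContDiff ℝ (⊤ : ℕ∞) U1) (hU2 : ContDiff ℝ (⊤ : ℕ∞) U2)
    (ga lam T1 Tn : ℝ) (hga : 0 < ga) (hT1 : 0 < T1) (hTn : 0 < Tn)
    (i : ℕ) (hi1 : 1 ≤ i) (hi2 : i ≤ n) :
    ∀ x : Phase d n,
      gen d n U1 U2 ga lam T1 Tn (locH d n U1 U2 i) x
        = flow d n U2 lam (i - 1) x - flow d n U2 lam i x := by
  intro x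
  have hi0 : i ∈ Finset.Icc 1 n := Finset.mem_Icc.2 ⟨hi1, hi2⟩
  by_cases h2 : 2 ≤ i
  · by_cases h3 : i < n
    · -- middle case
      have hmem1 : i - 1 ∈ Finset.Icc 1 n := Finset.mem_Icc.2 ⟨by omega, by omega⟩
      have hmemp : i + 1 ∈ Finset.Icc 1 n := Finset.mem_Icc.2 ⟨by omega, by omega⟩
      have hTQ : (∑ k ∈ Finset.Icc 1 n, ∑ j, nth x.1 k j
            * pd (locH d n U1 U2 i) (eQ d n k j) x)
          = (∑ j, nth x.1 i j * (fderiv ℝ U1 (nth x.2.1 i) (Pi.single j 1)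
               - fderiv ℝ U2 (nth x.2.1 (i - 1) - nth x.2.1 i) (Pi.single j 1) / 2
               + fderiv ℝ U2 (nth x.2.1 i - nth x.2.1 (i + 1)) (Pi.single j 1) / 2))
            + (∑ j, nth x.1 (i - 1) j
               * (fderiv ℝ U2 (nth x.2.1 (i - 1) - nth x.2.1 i) (Pi.single j 1) / 2))
            - (∑ j, nth x.1 (i + 1) j
               * (fderiv ℝ U2 (nth x.2.1 i - nth x.2.1 (i + 1)) (Pi.single j 1) / 2)) := by
        have step : ∀ k ∈ Finset.Icc 1 n,
            (∑ j, nth x.1 k j * pd (locH d n U1 U2 i) (eQ d n k j) x)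
            = (if k = i then (∑ j, nth x.1 k j * (fderiv ℝ U1 (nth x.2.1 i) (Pi.single j 1)
                 - fderiv ℝ U2 (nth x.2.1 (i - 1) - nth x.2.1 i) (Pi.single j 1) / 2
                 + fderiv ℝ U2 (nth x.2.1 i - nth x.2.1 (i + 1)) (Pi.single j 1) / 2)) else 0)
              + (if k = i - 1 then (∑ j, nth x.1 k j
                 * (fderiv ℝ U2 (nth x.2.1 (i - 1) - nth x.2.1 i) (Pi.single j 1) / 2)) else 0)
              - (if k = i + 1 then (∑ j, nth x.1 k j
                 * (fderiv ℝ U2 (nth x.2.1 i - nth x.2.1 (i + 1)) (Pi.single j 1) / 2)) else 0) := by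
          intro k hk
          rw [Finset.mem_Icc] at hk
          have inner : ∀ j : Fin d, nth x.1 k j * pd (locH d n U1 U2 i) (eQ d n k j) x
              = nth x.1 k j * ((if k = i then fderiv ℝ U1 (nth x.2.1 i) (Pi.single j 1)
                 - fderiv ℝ U2 (nth x.2.1 (i - 1) - nth x.2.1 i) (Pi.single j 1) / 2
                 + fderiv ℝ U2 (nth x.2.1 i - nth x.2.1 (i + 1)) (Pi.single j 1) / 2 else 0)
                + (if k = i - 1 then
                    fderiv ℝ U2 (nth x.2.1 (i - 1) - nth x.2.1 i) (Pi.single j 1) / 2 else 0)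
                - (if k = i + 1 then
                    fderiv ℝ U2 (nth x.2.1 i - nth x.2.1 (i + 1)) (Pi.single j 1) / 2 else 0)) := by
            intro j
            rw [pd_locH_eQ hU1 hU2 hi1 hi2 hk.1 hk.2]
            simp only [if_pos h2, if_pos h3, h2, h3, true_and, if_true]
          rw [Finset.sum_congr rfl (fun j _ => inner j)]
          simp only [mul_add, mul_sub, mul_ite, mul_zero, Finset.sum_add_distrib,
            Finset.sum_sub_distrib, Finset.sum_ite_irrel, Finset.sum_const_zero]
        rw [Finset.sum_congr rfl step]
        simp only [Finset.sum_add_distrib, Finset.sum_sub_distrib, Finset.sum_ite_eq',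
          hi0, hmem1, hmemp, if_true]
      have hTP : (∑ k ∈ Finset.Icc 1 n, ∑ j,
            fderiv ℝ (Vpot d n U1 U2) x.2.1 (basisQ d n k j)
            * pd (locH d n U1 U2 i) (eP d n k j) x)
          = ∑ j, (fderiv ℝ U1 (nth x.2.1 i) (Pi.single j 1)
              + fderiv ℝ U2 (nth x.2.1 i - nth x.2.1 (i + 1)) (Pi.single j 1)
              - fderiv ℝ U2 (nth x.2.1 (i - 1) - nth x.2.1 i) (Pi.single j 1))
              * nth x.1 i j := by
        have step : ∀ k ∈ Finset.Icc 1 n,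
            (∑ j, fderiv ℝ (Vpot d n U1 U2) x.2.1 (basisQ d n k j)
              * pd (locH d n U1 U2 i) (eP d n k j) x)
            = (if k = i then (∑ j, fderiv ℝ (Vpot d n U1 U2) x.2.1 (basisQ d n k j)
                * nth x.1 i j) else 0) := by
          intro k hk
          rw [Finset.mem_Icc] at hk
          rw [Finset.sum_congr rfl (fun j _ => by rw [pd_locH_eP hU1 hU2 hk.1 hk.2])]
          simp only [mul_ite, mul_zero, Finset.sum_ite_irrel, Finset.sum_const_zero]
        rw [Finset.sum_congr rfl step]
        simp only [Finset.sum_ite_eq', hi0, if_true]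
        refine Finset.sum_congr rfl fun j _ => ?_
        rw [fderiv_Vpot_basis hU1 hU2 hi1 hi2, if_pos h3, if_pos h2]
      have hflowL : flow d n U2 lam (i - 1) x
          = ∑ j, ((nth x.1 (i - 1) j + nth x.1 i j) / 2)
            * fderiv ℝ U2 (nth x.2.1 (i - 1) - nth x.2.1 i) (Pi.single j 1) := by
        rw [flow, if_neg (by omega), if_neg (by omega), show i - 1 + 1 = i from by omega]
      have hflowR : flow d n U2 lam i x
          = ∑ j, ((nth x.1 i j + nth x.1 (i + 1) j) / 2)
            * fderiv ℝ U2 (nth x.2.1 i - nth x.2.1 (i + 1)) (Pi.single j 1) := by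
        rw [flow, if_neg (by omega), if_neg (by omega)]
      simp only [gen, gen0, gen1]
      rw [hTQ, hTP, hflowL, hflowR]
      simp only [pd2_locH_eR1 hU1 hU2, pd2_locH_eRn hU1 hU2, pd_locH_eR1 hU1 hU2,
        pd_locH_eRn hU1 hU2,
        pd_locH_eP hU1 hU2 (le_refl 1) (show (1:ℕ) ≤ n by omega),
        pd_locH_eP hU1 hU2 (show (1:ℕ) ≤ n by omega) (le_refl n),
        show ((1:ℕ) = i) = False from eq_false (by omega),
        show ((n:ℕ) = i) = False from eq_false (by omega),
        if_false, mul_zero, Finset.sum_const_zero, add_zero, zero_add, sub_zero,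
        zero_sub, neg_zero]
      have hfinal : (∑ j, ((nth x.1 i j * (fderiv ℝ U1 (nth x.2.1 i) (Pi.single j 1)
               - fderiv ℝ U2 (nth x.2.1 (i - 1) - nth x.2.1 i) (Pi.single j 1) / 2
               + fderiv ℝ U2 (nth x.2.1 i - nth x.2.1 (i + 1)) (Pi.single j 1) / 2))
            + (nth x.1 (i - 1) j
               * (fderiv ℝ U2 (nth x.2.1 (i - 1) - nth x.2.1 i) (Pi.single j 1) / 2))
            - (nth x.1 (i + 1) j
               * (fderiv ℝ U2 (nth x.2.1 i - nth x.2.1 (i + 1)) (Pi.single j 1) / 2))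
            - (fderiv ℝ U1 (nth x.2.1 i) (Pi.single j 1)
              + fderiv ℝ U2 (nth x.2.1 i - nth x.2.1 (i + 1)) (Pi.single j 1)
              - fderiv ℝ U2 (nth x.2.1 (i - 1) - nth x.2.1 i) (Pi.single j 1))
              * nth x.1 i j))
          = ∑ j, ((((nth x.1 (i - 1) j + nth x.1 i j) / 2)
            * fderiv ℝ U2 (nth x.2.1 (i - 1) - nth x.2.1 i) (Pi.single j 1))
            - (((nth x.1 i j + nth x.1 (i + 1) j) / 2)
            * fderiv ℝ U2 (nth x.2.1 i - nth x.2.1 (i + 1)) (Pi.single j 1))) :=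
        Finset.sum_congr rfl fun j _ => by ring
      simp only [Finset.sum_add_distrib, Finset.sum_sub_distrib] at hfinal
      linear_combination hfinal
    · -- i = n case
      have hin : i = n := by omega
      subst hin
      have hmem1 : i - 1 ∈ Finset.Icc 1 i := Finset.mem_Icc.2 ⟨by omega, by omega⟩
      have hTQ : (∑ k ∈ Finset.Icc 1 i, ∑ j, nth x.1 k j
            * pd (locH d i U1 U2 i) (eQ d i k j) x)
          = (∑ j, nth x.1 i j * (fderiv ℝ U1 (nth x.2.1 i) (Pi.single j 1)
               - fderiv ℝ U2 (nth x.2.1 (i - 1) - nth x.2.1 i) (Pi.single j 1) / 2))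
            + (∑ j, nth x.1 (i - 1) j
               * (fderiv ℝ U2 (nth x.2.1 (i - 1) - nth x.2.1 i) (Pi.single j 1) / 2)) := by
        have step : ∀ k ∈ Finset.Icc 1 i,
            (∑ j, nth x.1 k j * pd (locH d i U1 U2 i) (eQ d i k j) x)
            = (if k = i then (∑ j, nth x.1 k j * (fderiv ℝ U1 (nth x.2.1 i) (Pi.single j 1)
                 - fderiv ℝ U2 (nth x.2.1 (i - 1) - nth x.2.1 i) (Pi.single j 1) / 2)) else 0)
              + (if k = i - 1 then (∑ j, nth x.1 k j
                 * (fderiv ℝ U2 (nth x.2.1 (i - 1) - nth x.2.1 i) (Pi.single j 1) / 2)) else 0) := by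
          intro k hk
          rw [Finset.mem_Icc] at hk
          have inner : ∀ j : Fin d, nth x.1 k j * pd (locH d i U1 U2 i) (eQ d i k j) x
              = nth x.1 k j * ((if k = i then fderiv ℝ U1 (nth x.2.1 i) (Pi.single j 1)
                 - fderiv ℝ U2 (nth x.2.1 (i - 1) - nth x.2.1 i) (Pi.single j 1) / 2 else 0)
                + (if k = i - 1 then
                    fderiv ℝ U2 (nth x.2.1 (i - 1) - nth x.2.1 i) (Pi.single j 1) / 2 else 0)) := by
            intro j
            rw [pd_locH_eQ hU1 hU2 hi1 hi2 hk.1 hk.2]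
            simp only [if_pos h2, h2, true_and, if_true, if_neg h3, h3, false_and, if_false,
              zero_div, add_zero, sub_zero]
          rw [Finset.sum_congr rfl (fun j _ => inner j)]
          simp only [mul_add, mul_sub, mul_ite, mul_zero, Finset.sum_add_distrib,
            Finset.sum_sub_distrib, Finset.sum_ite_irrel, Finset.sum_const_zero]
        rw [Finset.sum_congr rfl step]
        simp only [Finset.sum_add_distrib, Finset.sum_ite_eq', hi0, hmem1, if_true]
      have hTP : (∑ k ∈ Finset.Icc 1 i, ∑ j,
            fderiv ℝ (Vpot d i U1 U2) x.2.1 (basisQ d i k j)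
            * pd (locH d i U1 U2 i) (eP d i k j) x)
          = ∑ j, (fderiv ℝ U1 (nth x.2.1 i) (Pi.single j 1)
              - fderiv ℝ U2 (nth x.2.1 (i - 1) - nth x.2.1 i) (Pi.single j 1))
              * nth x.1 i j := by
        have step : ∀ k ∈ Finset.Icc 1 i,
            (∑ j, fderiv ℝ (Vpot d i U1 U2) x.2.1 (basisQ d i k j)
              * pd (locH d i U1 U2 i) (eP d i k j) x)
            = (if k = i then (∑ j, fderiv ℝ (Vpot d i U1 U2) x.2.1 (basisQ d i k j)
                * nth x.1 i j) else 0) := by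
          intro k hk
          rw [Finset.mem_Icc] at hk
          rw [Finset.sum_congr rfl (fun j _ => by rw [pd_locH_eP hU1 hU2 hk.1 hk.2])]
          simp only [mul_ite, mul_zero, Finset.sum_ite_irrel, Finset.sum_const_zero]
        rw [Finset.sum_congr rfl step]
        simp only [Finset.sum_ite_eq', hi0, if_true]
        refine Finset.sum_congr rfl fun j _ => ?_
        rw [fderiv_Vpot_basis hU1 hU2 hi1 hi2, if_neg h3, if_pos h2, add_zero]
      have hflowL : flow d i U2 lam (i - 1) x
          = ∑ j, ((nth x.1 (i - 1) j + nth x.1 i j) / 2)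
            * fderiv ℝ U2 (nth x.2.1 (i - 1) - nth x.2.1 i) (Pi.single j 1) := by
        rw [flow, if_neg (by omega), if_neg (by omega), show i - 1 + 1 = i from by omega]
      have hflowR : flow d i U2 lam i x
          = lam * ∑ j, x.2.2.2 j * nth x.1 i j := by
        rw [flow, if_neg (by omega), if_pos rfl, dotp]
      simp only [gen, gen0, gen1]
      rw [hTQ, hTP, hflowL, hflowR]
      simp only [pd2_locH_eR1 hU1 hU2, pd2_locH_eRn hU1 hU2, pd_locH_eR1 hU1 hU2,
        pd_locH_eRn hU1 hU2,
        pd_locH_eP hU1 hU2 (le_refl 1) (show (1:ℕ) ≤ i by omega),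
        pd_locH_eP hU1 hU2 (show (1:ℕ) ≤ i by omega) (le_refl i),
        show ((1:ℕ) = i) = False from eq_false (by omega),
        show (i = i) = True from eq_true rfl, if_true,
        if_false, mul_zero, Finset.sum_const_zero, add_zero, zero_add, sub_zero,
        zero_sub, neg_zero]
      have hfinal : (∑ j, ((nth x.1 i j * (fderiv ℝ U1 (nth x.2.1 i) (Pi.single j 1)
               - fderiv ℝ U2 (nth x.2.1 (i - 1) - nth x.2.1 i) (Pi.single j 1) / 2))
            + (nth x.1 (i - 1) j
               * (fderiv ℝ U2 (nth x.2.1 (i - 1) - nth x.2.1 i) (Pi.single j 1) / 2))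
            - (fderiv ℝ U1 (nth x.2.1 i) (Pi.single j 1)
              - fderiv ℝ U2 (nth x.2.1 (i - 1) - nth x.2.1 i) (Pi.single j 1))
              * nth x.1 i j))
          = ∑ j, (((nth x.1 (i - 1) j + nth x.1 i j) / 2)
            * fderiv ℝ U2 (nth x.2.1 (i - 1) - nth x.2.1 i) (Pi.single j 1)) :=
        Finset.sum_congr rfl fun j _ => by ring
      simp only [Finset.sum_add_distrib, Finset.sum_sub_distrib] at hfinal
      linear_combination hfinal
  · -- i = 1 case
    have hi1' : i = 1 := by omega
    subst hi1'
    have h3 : (1:ℕ) < n := by omega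
    have hmemp : 1 + 1 ∈ Finset.Icc 1 n := Finset.mem_Icc.2 ⟨by omega, by omega⟩
    have hTQ : (∑ k ∈ Finset.Icc 1 n, ∑ j, nth x.1 k j
          * pd (locH d n U1 U2 1) (eQ d n k j) x)
        = (∑ j, nth x.1 1 j * (fderiv ℝ U1 (nth x.2.1 1) (Pi.single j 1)
             + fderiv ℝ U2 (nth x.2.1 1 - nth x.2.1 (1 + 1)) (Pi.single j 1) / 2))
          - (∑ j, nth x.1 (1 + 1) j
             * (fderiv ℝ U2 (nth x.2.1 1 - nth x.2.1 (1 + 1)) (Pi.single j 1) / 2)) := by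
      have step : ∀ k ∈ Finset.Icc 1 n,
          (∑ j, nth x.1 k j * pd (locH d n U1 U2 1) (eQ d n k j) x)
          = (if k = 1 then (∑ j, nth x.1 k j * (fderiv ℝ U1 (nth x.2.1 1) (Pi.single j 1)
               + fderiv ℝ U2 (nth x.2.1 1 - nth x.2.1 (1 + 1)) (Pi.single j 1) / 2)) else 0)
            - (if k = 1 + 1 then (∑ j, nth x.1 k j
               * (fderiv ℝ U2 (nth x.2.1 1 - nth x.2.1 (1 + 1)) (Pi.single j 1) / 2)) else 0) := by
        intro k hk
        rw [Finset.mem_Icc] at hk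
        have inner : ∀ j : Fin d, nth x.1 k j * pd (locH d n U1 U2 1) (eQ d n k j) x
            = nth x.1 k j * ((if k = 1 then fderiv ℝ U1 (nth x.2.1 1) (Pi.single j 1)
               + fderiv ℝ U2 (nth x.2.1 1 - nth x.2.1 (1 + 1)) (Pi.single j 1) / 2 else 0)
              - (if k = 1 + 1 then
                  fderiv ℝ U2 (nth x.2.1 1 - nth x.2.1 (1 + 1)) (Pi.single j 1) / 2 else 0)) := by
          intro j
          rw [pd_locH_eQ hU1 hU2 hi1 hi2 hk.1 hk.2]
          simp only [if_neg h2, h2, false_and, if_false, if_pos h3,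
            show ((1:ℕ) < n) = True from eq_true h3, true_and, if_true,
            zero_div, sub_zero, add_zero]
        rw [Finset.sum_congr rfl (fun j _ => inner j)]
        simp only [mul_add, mul_sub, mul_ite, mul_zero, Finset.sum_add_distrib,
          Finset.sum_sub_distrib, Finset.sum_ite_irrel, Finset.sum_const_zero]
      rw [Finset.sum_congr rfl step]
      simp only [Finset.sum_sub_distrib, Finset.sum_ite_eq', hi0, hmemp, if_true]
    have hTP : (∑ k ∈ Finset.Icc 1 n, ∑ j,
          fderiv ℝ (Vpot d n U1 U2) x.2.1 (basisQ d n k j)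
          * pd (locH d n U1 U2 1) (eP d n k j) x)
        = ∑ j, (fderiv ℝ U1 (nth x.2.1 1) (Pi.single j 1)
            + fderiv ℝ U2 (nth x.2.1 1 - nth x.2.1 (1 + 1)) (Pi.single j 1))
            * nth x.1 1 j := by
      have step : ∀ k ∈ Finset.Icc 1 n,
          (∑ j, fderiv ℝ (Vpot d n U1 U2) x.2.1 (basisQ d n k j)
            * pd (locH d n U1 U2 1) (eP d n k j) x)
          = (if k = 1 then (∑ j, fderiv ℝ (Vpot d n U1 U2) x.2.1 (basisQ d n k j)
              * nth x.1 1 j) else 0) := by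
        intro k hk
        rw [Finset.mem_Icc] at hk
        rw [Finset.sum_congr rfl (fun j _ => by rw [pd_locH_eP hU1 hU2 hk.1 hk.2])]
        simp only [mul_ite, mul_zero, Finset.sum_ite_irrel, Finset.sum_const_zero]
      rw [Finset.sum_congr rfl step]
      simp only [Finset.sum_ite_eq', hi0, if_true]
      refine Finset.sum_congr rfl fun j _ => ?_
      rw [fderiv_Vpot_basis hU1 hU2 hi1 hi2, if_pos h3, if_neg h2, sub_zero]
    have hflowL : flow d n U2 lam (1 - 1) x
        = -lam * ∑ j, x.2.2.1 j * nth x.1 1 j := by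
      rw [show (1:ℕ) - 1 = 0 from rfl, flow, if_pos rfl, dotp]
    have hflowR : flow d n U2 lam 1 x
        = ∑ j, ((nth x.1 1 j + nth x.1 (1 + 1) j) / 2)
          * fderiv ℝ U2 (nth x.2.1 1 - nth x.2.1 (1 + 1)) (Pi.single j 1) := by
      rw [flow, if_neg (by omega), if_neg (by omega)]
    simp only [gen, gen0, gen1]
    rw [hTQ, hTP, hflowL, hflowR]
    simp only [pd2_locH_eR1 hU1 hU2, pd2_locH_eRn hU1 hU2, pd_locH_eR1 hU1 hU2,
      pd_locH_eRn hU1 hU2,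
      pd_locH_eP hU1 hU2 (le_refl 1) (show (1:ℕ) ≤ n by omega),
      pd_locH_eP hU1 hU2 (show (1:ℕ) ≤ n by omega) (le_refl n),
      show ((1:ℕ) = 1) = True from eq_true rfl,
      show (n = 1) = False from eq_false (by omega), if_true,
      if_false, mul_zero, Finset.sum_const_zero, add_zero, zero_add, sub_zero,
      zero_sub, neg_zero]
    have hfinal : (∑ j, ((nth x.1 1 j * (fderiv ℝ U1 (nth x.2.1 1) (Pi.single j 1)
             + fderiv ℝ U2 (nth x.2.1 1 - nth x.2.1 (1 + 1)) (Pi.single j 1) / 2))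
          - (nth x.1 (1 + 1) j
             * (fderiv ℝ U2 (nth x.2.1 1 - nth x.2.1 (1 + 1)) (Pi.single j 1) / 2))
          - (fderiv ℝ U1 (nth x.2.1 1) (Pi.single j 1)
            + fderiv ℝ U2 (nth x.2.1 1 - nth x.2.1 (1 + 1)) (Pi.single j 1))
            * nth x.1 1 j))
        = ∑ j, (-(((nth x.1 1 j + nth x.1 (1 + 1) j) / 2)
          * fderiv ℝ U2 (nth x.2.1 1 - nth x.2.1 (1 + 1)) (Pi.single j 1))) :=
      Finset.sum_congr rfl fun j _ => by ring
    simp only [Finset.sum_add_distrib, Finset.sum_sub_distrib, Finset.sum_neg_distrib]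
      at hfinal
    linear_combination hfinal
end EP
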